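/- Define Φ(M1) := Σ_{j∈V_S(M1)} w_j + f^w(S∖V_S(M1)) for matchings M1 of G[D1,S]. Then the maximum of Φ over all matchings of G[D1,S] is attained at some maximum-cardinality matching; equivalently, max over all matchings M1 of G[D1,S] of Φ(M1) equals max over matchings M1 with |M1| = ν(D1,S) of Φ(M1). Consequently (Proposition 2), the value of the optimum online policy equals the maximum of Σ_{j∈S∖T} w_j + f^w(T) over all T ⊆ S such that S∖T is covered by a maximum-cardinality matching of G[D1,S], and an optimal first-stage matching can be taken to be a maximum unweighted matching of G[D1,S]. -/

import Mathlib

open scoped BigOperators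

/-- `M` is a matching contained in the edge set `Ed`:
a set of pairwise vertex-disjoint edges. -/
def IsMatchingIn {D S : Type*} (Ed M : Finset (D × S)) : Prop :=
  M ⊆ Ed ∧ ∀ e ∈ M, ∀ e' ∈ M, e ≠ e' → e.1 ≠ e'.1 ∧ e.2 ≠ e'.2

/-- `M` is a matching of `Ed` using only edges between `A` and `T`. -/
def IsMatchingBtw {D S : Type*} (Ed : Finset (D × S)) (A : Finset D) (T : Finset S)
    (M : Finset (D × S)) : Prop :=
  IsMatchingIn Ed M ∧ ∀ e ∈ M, e.1 ∈ A ∧ e.2 ∈ T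

/-- The set of supply vertices covered by the edge set `M`. -/
def suppliesOf {D S : Type*} [DecidableEq S] (M : Finset (D × S)) : Finset S :=
  M.image Prod.snd

/-- `maxWM w Ed A T`: the maximum, over matchings using only edges between `A` and `T`,
of the total weight of matched supply vertices. -/
noncomputable def maxWM {D S : Type*} (w : S → ℝ) (Ed : Finset (D × S))
    (A : Finset D) (T : Finset S) : ℝ :=
  sSup ((fun M => ∑ e ∈ M, w e.2) '' {M | IsMatchingBtw Ed A T M})

/-- `nuMatch Ed A T`: the maximum cardinality of a matching using only edges
between `A` and `T`. -/
noncomputable def nuMatch {D S : Type*} (Ed : Finset (D × S))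
    (A : Finset D) (T : Finset S) : ℕ :=
  sSup {n | ∃ M, IsMatchingBtw Ed A T M ∧ M.card = n}

/-- Probability that the independently realized second-stage demand set equals `A ⊆ D2`. -/
noncomputable def probOf {D : Type*} [DecidableEq D] (π : D → ℝ) (D2 A : Finset D) : ℝ :=
  (∏ i ∈ A, π i) * ∏ i ∈ D2 \ A, (1 - π i)

/-- `f^w(T)`: the expected maximum supply-weighted matching between the independently
realized second-stage demand set and `T`. -/
noncomputable def expMaxWM {D S : Type*} [DecidableEq D] (π : D → ℝ) (D2 : Finset D)
    (w : S → ℝ) (Ed : Finset (D × S)) (T : Finset S) : ℝ :=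
  ∑ A ∈ D2.powerset, probOf π D2 A * maxWM w Ed A T

set_option linter.unusedSectionVars false
set_option linter.unusedVariables false

section Comb
variable {D S : Type*} [DecidableEq D] [DecidableEq S]

/-- pairwise vertex-disjointness of a set of edges -/
def PW (M : Finset (D × S)) : Prop :=
  ∀ e ∈ M, ∀ e' ∈ M, e ≠ e' → e.1 ≠ e'.1 ∧ e.2 ≠ e'.2

lemma PW.eq_of_snd {M : Finset (D × S)} (h : PW M) {e e' : D × S}
    (he : e ∈ M) (he' : e' ∈ M) (h2 : e.2 = e'.2) : e = e' := by
  by_contra hne; exact (h e he e' he' hne).2 h2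

lemma PW.eq_of_fst {M : Finset (D × S)} (h : PW M) {e e' : D × S}
    (he : e ∈ M) (he' : e' ∈ M) (h2 : e.1 = e'.1) : e = e' := by
  by_contra hne; exact (h e he e' he' hne).1 h2

lemma PW.mono {M N : Finset (D × S)} (h : PW N) (hs : M ⊆ N) : PW M :=
  fun e he e' he' hne => h e (hs he) e' (hs he') hne

lemma PW.insert {M : Finset (D × S)} (hM : PW M) {e : D × S}
    (h : ∀ e' ∈ M, e'.1 ≠ e.1 ∧ e'.2 ≠ e.2) : PW (insert e M) := by
  intro a ha b hb hab
  rcases Finset.mem_insert.1 ha with ha' | ha' <;> rcases Finset.mem_insert.1 hb with hb' | hb'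
  · exact absurd (ha'.trans hb'.symm) hab
  · subst ha'; exact ⟨fun hh => (h b hb').1 hh.symm, fun hh => (h b hb').2 hh.symm⟩
  · subst hb'; exact h a ha'
  · exact hM a ha' b hb' hab

lemma mem_supp {M : Finset (D × S)} {j : S} :
    j ∈ suppliesOf M ↔ ∃ e ∈ M, e.2 = j := by simp [suppliesOf]

lemma supp_subset {M M' : Finset (D × S)} (h : M ⊆ M') :
    suppliesOf M ⊆ suppliesOf M' := Finset.image_subset_image h

lemma supp_insert (e : D × S) (M : Finset (D × S)) :
    suppliesOf (insert e M) = insert e.2 (suppliesOf M) := Finset.image_insert _ _ _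

lemma card_supp {M : Finset (D × S)} (h : PW M) : (suppliesOf M).card = M.card :=
  Finset.card_image_of_injOn fun e he e' he' h2 => h.eq_of_snd he he' h2

/-- The alternating-walk lemma. -/
lemma walk (M N : Finset (D × S)) (hM : PW M) (hN : PW N) (j0 : S)
    (hj0N : j0 ∈ suppliesOf N) (hj0M : j0 ∉ suppliesOf M) :
    (∃ M', PW M' ∧ M' ⊆ M ∪ N ∧ M'.card = M.card + 1 ∧
       suppliesOf M ⊆ suppliesOf M' ∧ j0 ∈ suppliesOf M') ∨
    (∃ Mp Np : Finset (D × S), Mp ⊆ M ∧ Np ⊆ N ∧ Mp.card = Np.card ∧ Np.Nonempty ∧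
       j0 ∈ suppliesOf Np ∧
       ∀ e ∈ (M \ Mp) ∪ (N \ Np), ∀ e' ∈ Mp ∪ Np, e.1 ≠ e'.1 ∧ e.2 ≠ e'.2) := by
  obtain ⟨e, heN, he2⟩ := mem_supp.1 hj0N
  have heM : e ∉ M := fun h => hj0M (mem_supp.2 ⟨e, h, he2⟩)
  by_cases hd0 : ∃ e0 ∈ M, e0.1 = e.1
  · obtain ⟨e0, he0M, he01⟩ := hd0
    have he0snd : e0.2 ≠ j0 := fun h => hj0M (mem_supp.2 ⟨e0, he0M, h⟩)
    have hMcard : M.card = (M.erase e0).card + 1 := (Finset.card_erase_add_one he0M).symm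
    have hM2fst : ∀ e' ∈ M.erase e0, e'.1 ≠ e.1 := by
      intro e' he' h
      exact (Finset.ne_of_mem_erase he')
        (hM.eq_of_fst (Finset.mem_of_mem_erase he') he0M (h.trans he01.symm))
    have hM2sndj1 : ∀ e' ∈ M.erase e0, e'.2 ≠ e0.2 := by
      intro e' he' h
      exact (Finset.ne_of_mem_erase he')
        (hM.eq_of_snd (Finset.mem_of_mem_erase he') he0M h)
    have hM2sndj0 : ∀ e' ∈ M.erase e0, e'.2 ≠ j0 := by
      intro e' he' h
      exact hj0M (mem_supp.2 ⟨e', Finset.mem_of_mem_erase he', h⟩)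
    have hN2fst : ∀ e' ∈ N.erase e, e'.1 ≠ e.1 := by
      intro e' he' h
      exact (Finset.ne_of_mem_erase he') (hN.eq_of_fst (Finset.mem_of_mem_erase he') heN h)
    have hN2sndj0 : ∀ e' ∈ N.erase e, e'.2 ≠ j0 := by
      intro e' he' h
      exact (Finset.ne_of_mem_erase he')
        (hN.eq_of_snd (Finset.mem_of_mem_erase he') heN (h.trans he2.symm))
    by_cases hj1 : e0.2 ∈ suppliesOf N
    · -- the walk continues from e0.2
      obtain ⟨e1, he1N, he12⟩ := mem_supp.1 hj1
      have he1e : e1 ≠ e := by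
        intro h; apply he0snd; rw [← he12, h, he2]
      have hj1N2 : e0.2 ∈ suppliesOf (N.erase e) :=
        mem_supp.2 ⟨e1, Finset.mem_erase_of_ne_of_mem he1e he1N, he12⟩
      have hj1M2 : e0.2 ∉ suppliesOf (M.erase e0) := by
        intro h; obtain ⟨e', he', h2⟩ := mem_supp.1 h
        exact hM2sndj1 e' he' h2
      rcases walk (M.erase e0) (N.erase e) (hM.mono (Finset.erase_subset _ _))
          (hN.mono (Finset.erase_subset _ _)) e0.2 hj1N2 hj1M2 with
        ⟨M', hPW, hsub, hcard, hsupp, hj1'⟩ | ⟨Mp2, Np2, h1, h2, h3, h4, h5, hclos⟩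
      · -- success: add `e` on top of `M'`
        left
        have hM'avoid : ∀ e' ∈ M', e'.1 ≠ e.1 ∧ e'.2 ≠ e.2 := by
          intro e' he'
          rcases Finset.mem_union.1 (hsub he') with h | h
          · exact ⟨hM2fst e' h, fun hh => hM2sndj0 e' h (hh.trans he2)⟩
          · exact ⟨hN2fst e' h, fun hh => hN2sndj0 e' h (hh.trans he2)⟩
        have heM' : e ∉ M' := fun h => (hM'avoid e h).1 rfl
        refine ⟨insert e M', hPW.insert hM'avoid, ?_, ?_, ?_, ?_⟩
        · intro a ha
          rcases Finset.mem_insert.1 ha with ha' | ha'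
          · exact ha' ▸ Finset.mem_union_right _ heN
          · rcases Finset.mem_union.1 (hsub ha') with h | h
            · exact Finset.mem_union_left _ (Finset.mem_of_mem_erase h)
            · exact Finset.mem_union_right _ (Finset.mem_of_mem_erase h)
        · rw [Finset.card_insert_of_notMem heM', hcard, hMcard]
        · intro j hj
          rw [supp_insert]
          obtain ⟨e', he', h2⟩ := mem_supp.1 hj
          by_cases he'e0 : e' = e0
          · subst he'e0
            exact Finset.mem_insert_of_mem (h2 ▸ hj1')
          · exact Finset.mem_insert_of_mem
              (hsupp (mem_supp.2 ⟨e', Finset.mem_erase_of_ne_of_mem he'e0 he', h2⟩))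
        · rw [supp_insert, he2]; exact Finset.mem_insert_self _ _
      · -- failure: extend the failure path by `e0` and `e`
        right
        have he0Mp2 : e0 ∉ Mp2 := fun h => Finset.notMem_erase e0 M (h1 h)
        have heNp2 : e ∉ Np2 := fun h => Finset.notMem_erase e N (h2 h)
        refine ⟨insert e0 Mp2, insert e Np2, ?_, ?_, ?_, ⟨e, Finset.mem_insert_self _ _⟩,
          mem_supp.2 ⟨e, Finset.mem_insert_self _ _, he2⟩, ?_⟩
        · exact Finset.insert_subset he0M (h1.trans (Finset.erase_subset _ _))
        · exact Finset.insert_subset heN (h2.trans (Finset.erase_subset _ _))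
        · rw [Finset.card_insert_of_notMem he0Mp2, Finset.card_insert_of_notMem heNp2, h3]
        · -- closure
          have hMrw : M \ insert e0 Mp2 = (M.erase e0) \ Mp2 := by
            ext x; simp only [Finset.mem_sdiff, Finset.mem_erase, Finset.mem_insert,
              Finset.mem_of_mem_erase, not_or]; tauto
          have hNrw : N \ insert e Np2 = (N.erase e) \ Np2 := by
            ext x; simp only [Finset.mem_sdiff, Finset.mem_erase, Finset.mem_insert,
              not_or]; tauto
          intro a ha b hb
          rw [hMrw, hNrw] at ha
          have hA : a.1 ≠ e.1 ∧ a.2 ≠ e0.2 ∧ a.2 ≠ j0 := by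
            rcases Finset.mem_union.1 ha with h | h
            · have h' := (Finset.mem_sdiff.1 h).1
              exact ⟨hM2fst a h', hM2sndj1 a h', hM2sndj0 a h'⟩
            · have h' := Finset.mem_sdiff.1 h
              refine ⟨hN2fst a h'.1, fun hh => ?_, hN2sndj0 a h'.1⟩
              obtain ⟨g, hg, hg2⟩ := mem_supp.1 h5
              exact h'.2 ((hN.eq_of_snd (Finset.mem_of_mem_erase h'.1)
                (Finset.mem_of_mem_erase (h2 hg)) (hh.trans hg2.symm)) ▸ hg)
          rcases Finset.mem_union.1 hb with hb' | hb'
          · rcases Finset.mem_insert.1 hb' with hb'' | hb''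
            · subst hb''; exact ⟨fun h => hA.1 (h.trans he01), hA.2.1⟩
            · exact hclos a ha b (Finset.mem_union_left _ hb'')
          · rcases Finset.mem_insert.1 hb' with hb'' | hb''
            · subst hb''; exact ⟨hA.1, fun h => hA.2.2 (h.trans he2)⟩
            · exact hclos a ha b (Finset.mem_union_right _ hb'')
    · -- e0.2 not covered by N : single-step failure path {e0}, {e}
      right
      refine ⟨{e0}, {e}, Finset.singleton_subset_iff.2 he0M, Finset.singleton_subset_iff.2 heN,
        rfl, ⟨e, Finset.mem_singleton_self e⟩,
        mem_supp.2 ⟨e, Finset.mem_singleton_self e, he2⟩, ?_⟩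
      intro a ha b hb
      rw [Finset.sdiff_singleton_eq_erase, Finset.sdiff_singleton_eq_erase] at ha
      have hA : a.1 ≠ e.1 ∧ a.2 ≠ e0.2 ∧ a.2 ≠ j0 := by
        rcases Finset.mem_union.1 ha with h | h
        · exact ⟨hM2fst a h, hM2sndj1 a h, hM2sndj0 a h⟩
        · exact ⟨hN2fst a h,
            fun hh => hj1 (mem_supp.2 ⟨a, Finset.mem_of_mem_erase h, hh⟩),
            hN2sndj0 a h⟩
      rcases Finset.mem_union.1 hb with hb' | hb' <;> rw [Finset.mem_singleton] at hb'
      · subst hb'; exact ⟨fun h => hA.1 (h.trans he01), hA.2.1⟩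
      · subst hb'; exact ⟨hA.1, fun h => hA.2.2 (h.trans he2)⟩
  · -- success: both endpoints of e are free in M
    left
    push_neg at hd0
    have hefree : ∀ e' ∈ M, e'.1 ≠ e.1 ∧ e'.2 ≠ e.2 := by
      intro e' he'
      exact ⟨hd0 e' he', fun h => hj0M (mem_supp.2 ⟨e', he', h.trans he2⟩)⟩
    refine ⟨insert e M, hM.insert hefree, ?_, Finset.card_insert_of_notMem heM, ?_, ?_⟩
    · intro a ha
      rcases Finset.mem_insert.1 ha with ha' | ha'
      · exact ha' ▸ Finset.mem_union_right _ heN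
      · exact Finset.mem_union_left _ ha'
    · exact supp_subset (Finset.subset_insert _ _)
    · rw [supp_insert, he2]; exact Finset.mem_insert_self _ _
termination_by M.card
decreasing_by
  exact Finset.card_erase_lt_of_mem he0M

/-- The exchange lemma: a matching can be augmented while keeping all covered supplies. -/
lemma exchange (M N : Finset (D × S)) (hM : PW M) (hN : PW N) (h : M.card < N.card) :
    ∃ M', PW M' ∧ M' ⊆ M ∪ N ∧ M'.card = M.card + 1 ∧ suppliesOf M ⊆ suppliesOf M' := by
  have hcard : (suppliesOf M).card < (suppliesOf N).card := by
    rw [card_supp hM, card_supp hN]; exact h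
  obtain ⟨j0, hj0N, hj0M⟩ :=
    Finset.not_subset.1 (fun hsub => absurd (Finset.card_le_card hsub) (not_le.2 hcard))
  rcases walk M N hM hN j0 hj0N hj0M with
    ⟨M', h1, h2, h3, h4, _⟩ | ⟨Mp, Np, hMp, hNp, hcards, hNe, _, hclos⟩
  · exact ⟨M', h1, h2, h3, h4⟩
  · have hMpM : Mp.card ≤ M.card := Finset.card_le_card hMp
    have hNppos : 0 < Np.card := Finset.card_pos.2 hNe
    have hcN : (N \ Np).card = N.card - Np.card := Finset.card_sdiff_of_subset hNp
    have hcM : (M \ Mp).card = M.card - Mp.card := Finset.card_sdiff_of_subset hMp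
    have hlt : (M \ Mp).card < (N \ Np).card := by
      rw [hcN, hcM, hcards]
      exact Nat.sub_lt_sub_right (hcards ▸ hMpM) h
    obtain ⟨P, hP1, hP2, hP3, hP4⟩ :=
      exchange (M \ Mp) (N \ Np) (hM.mono Finset.sdiff_subset) (hN.mono Finset.sdiff_subset) hlt
    have hPavoid : ∀ a ∈ P, ∀ b ∈ Mp, a.1 ≠ b.1 ∧ a.2 ≠ b.2 := by
      intro a ha b hb
      exact hclos a (hP2 ha) b (Finset.mem_union_left _ hb)
    have hdisj : Disjoint P Mp := by
      rw [Finset.disjoint_left]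
      intro a ha hb
      exact (hPavoid a ha a hb).1 rfl
    refine ⟨P ∪ Mp, ?_, ?_, ?_, ?_⟩
    · intro a ha b hb hab
      rcases Finset.mem_union.1 ha with ha' | ha' <;> rcases Finset.mem_union.1 hb with hb' | hb'
      · exact hP1 a ha' b hb' hab
      · exact hPavoid a ha' b hb'
      · exact ⟨fun hh => (hPavoid b hb' a ha').1 hh.symm, fun hh => (hPavoid b hb' a ha').2 hh.symm⟩
      · exact hM.mono hMp a ha' b hb' hab
    · intro a ha
      rcases Finset.mem_union.1 ha with ha' | ha'
      · rcases Finset.mem_union.1 (hP2 ha') with h' | h'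
        · exact Finset.mem_union_left _ (Finset.mem_sdiff.1 h').1
        · exact Finset.mem_union_right _ (Finset.mem_sdiff.1 h').1
      · exact Finset.mem_union_left _ (hMp ha')
    · rw [Finset.card_union_of_disjoint hdisj, hP3, hcM]
      omega
    · intro j hj
      obtain ⟨e', he', h2⟩ := mem_supp.1 hj
      rw [suppliesOf, Finset.image_union]
      by_cases he'Mp : e' ∈ Mp
      · exact Finset.mem_union_right _ (mem_supp.2 ⟨e', he'Mp, h2⟩)
      · exact Finset.mem_union_left _
          (hP4 (mem_supp.2 ⟨e', Finset.mem_sdiff.2 ⟨he', he'Mp⟩, h2⟩))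
termination_by N.card
decreasing_by
  rw [hcN]; exact Nat.sub_lt (lt_of_le_of_lt (Nat.zero_le _) h) hNppos

end Comb

section Anal
variable {D S : Type*} [DecidableEq D] [DecidableEq S]
variable {w : S → ℝ} {Ed : Finset (D × S)}

lemma matchings_finite (A : Finset D) (T : Finset S) :
    {M | IsMatchingBtw Ed A T M}.Finite :=
  Set.Finite.subset (Ed.powerset.finite_toSet) (fun M hM => by
    simpa [Finset.mem_powerset] using hM.1.1)

lemma empty_matching (A : Finset D) (T : Finset S) :
    IsMatchingBtw Ed A T (∅ : Finset (D × S)) := by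
  refine ⟨⟨Finset.empty_subset _, ?_⟩, ?_⟩ <;> simp

lemma le_maxWM {A : Finset D} {T : Finset S} {M : Finset (D × S)}
    (hM : IsMatchingBtw Ed A T M) : ∑ e ∈ M, w e.2 ≤ maxWM w Ed A T :=
  le_csSup ((matchings_finite A T).image _).bddAbove ⟨M, hM, rfl⟩

lemma maxWM_le {A : Finset D} {T : Finset S} {b : ℝ}
    (h : ∀ M, IsMatchingBtw Ed A T M → ∑ e ∈ M, w e.2 ≤ b) :
    maxWM w Ed A T ≤ b :=
  csSup_le ⟨_, ⟨∅, empty_matching A T, rfl⟩⟩ (by rintro x ⟨M, hM, rfl⟩; exact h M hM)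

lemma maxWM_lip {A : Finset D} {T T' : Finset S} (hsub : T' ⊆ T)
    (hwn : ∀ j ∈ T \ T', 0 ≤ w j) :
    maxWM w Ed A T ≤ maxWM w Ed A T' + ∑ j ∈ T \ T', w j := by
  apply maxWM_le
  intro M hM
  have hPW : PW M := hM.1.2
  rw [← Finset.sum_filter_add_sum_filter_not M (fun e => e.2 ∈ T')]
  have h1 : ∑ e ∈ M.filter (fun e => e.2 ∈ T'), w e.2 ≤ maxWM w Ed A T' := by
    apply le_maxWM
    refine ⟨⟨(Finset.filter_subset _ _).trans hM.1.1,
      hPW.mono (Finset.filter_subset _ _)⟩, ?_⟩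
    intro e he
    have he' := Finset.mem_filter.1 he
    exact ⟨(hM.2 e he'.1).1, he'.2⟩
  have h2 : ∑ e ∈ M.filter (fun e => ¬ e.2 ∈ T'), w e.2 ≤ ∑ j ∈ T \ T', w j := by
    have hinj : ∑ j ∈ suppliesOf (M.filter (fun e => ¬ e.2 ∈ T')), w j
        = ∑ e ∈ M.filter (fun e => ¬ e.2 ∈ T'), w e.2 :=
      Finset.sum_image (fun x hx y hy hxy =>
        (hPW.mono (Finset.filter_subset _ _)).eq_of_snd hx hy hxy)
    rw [← hinj]
    apply Finset.sum_le_sum_of_subset_of_nonneg _ (fun j hj _ => hwn j hj)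
    intro j hj
    obtain ⟨e, he, hee⟩ := mem_supp.1 hj
    have he' := Finset.mem_filter.1 he
    exact Finset.mem_sdiff.2 ⟨hee ▸ (hM.2 e he'.1).2, hee ▸ he'.2⟩
  exact add_le_add h1 h2

lemma probOf_nonneg {π : D → ℝ} {D2 A : Finset D} (hA : A ⊆ D2)
    (hπ : ∀ i ∈ D2, π i ∈ Set.Icc (0:ℝ) 1) : 0 ≤ probOf π D2 A :=
  mul_nonneg (Finset.prod_nonneg fun i hi => (hπ i (hA hi)).1)
    (Finset.prod_nonneg fun i hi => by
      have := (hπ i (Finset.mem_sdiff.1 hi).1).2; linarith)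

lemma probOf_sum {π : D → ℝ} {D2 : Finset D} :
    ∑ A ∈ D2.powerset, probOf π D2 A = 1 := by
  have h := Finset.prod_add π (fun i => 1 - π i) D2
  have h1 : ∏ i ∈ D2, (π i + (1 - π i)) = 1 := by
    rw [Finset.prod_congr rfl (fun i _ => by ring : ∀ i ∈ D2, π i + (1 - π i) = (1:ℝ))]
    simp
  simp only [probOf]
  rw [← h, h1]

lemma expMaxWM_lip {π : D → ℝ} {D2 : Finset D} {T T' : Finset S} (hsub : T' ⊆ T)
    (hwn : ∀ j ∈ T \ T', 0 ≤ w j) (hπ : ∀ i ∈ D2, π i ∈ Set.Icc (0:ℝ) 1) :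
    expMaxWM π D2 w Ed T ≤ expMaxWM π D2 w Ed T' + ∑ j ∈ T \ T', w j := by
  rw [expMaxWM, expMaxWM]
  calc ∑ A ∈ D2.powerset, probOf π D2 A * maxWM w Ed A T
      ≤ ∑ A ∈ D2.powerset,
          (probOf π D2 A * maxWM w Ed A T' + probOf π D2 A * (∑ j ∈ T \ T', w j)) := by
        apply Finset.sum_le_sum
        intro A hA
        rw [← mul_add]
        exact mul_le_mul_of_nonneg_left (maxWM_lip hsub hwn)
          (probOf_nonneg (Finset.mem_powerset.1 hA) hπ)
    _ = (∑ A ∈ D2.powerset, probOf π D2 A * maxWM w Ed A T')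
        + (∑ A ∈ D2.powerset, probOf π D2 A) * (∑ j ∈ T \ T', w j) := by
        rw [Finset.sum_add_distrib, Finset.sum_mul]
    _ = _ := by rw [probOf_sum, one_mul]

lemma nu_bddAbove (A : Finset D) (T : Finset S) :
    BddAbove {n | ∃ M, IsMatchingBtw Ed A T M ∧ M.card = n} :=
  ⟨Ed.card, fun n ⟨M, hM, hn⟩ => hn ▸ Finset.card_le_card hM.1.1⟩

lemma nu_attained (A : Finset D) (T : Finset S) :
    ∃ N, IsMatchingBtw Ed A T N ∧ N.card = nuMatch Ed A T := by
  have h0 : (0:ℕ) ∈ {n | ∃ M, IsMatchingBtw Ed A T M ∧ M.card = n} :=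
    ⟨∅, empty_matching A T, rfl⟩
  exact Nat.sSup_mem ⟨0, h0⟩ (nu_bddAbove A T)

lemma card_le_nu {A : Finset D} {T : Finset S} {M : Finset (D × S)}
    (hM : IsMatchingBtw Ed A T M) : M.card ≤ nuMatch Ed A T :=
  le_csSup (nu_bddAbove A T) ⟨M, hM, rfl⟩

lemma Phi_le_Phi {D1 D2 : Finset D} {Ssup : Finset S} {π : D → ℝ}
    {M M' : Finset (D × S)} (hM : IsMatchingBtw Ed D1 Ssup M)
    (hM' : IsMatchingBtw Ed D1 Ssup M') (hw : ∀ j ∈ Ssup, 0 < w j)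
    (hπ : ∀ i ∈ D2, π i ∈ Set.Icc (0:ℝ) 1)
    (hsub : suppliesOf M ⊆ suppliesOf M') :
    (∑ j ∈ suppliesOf M, w j) + expMaxWM π D2 w Ed (Ssup \ suppliesOf M) ≤
    (∑ j ∈ suppliesOf M', w j) + expMaxWM π D2 w Ed (Ssup \ suppliesOf M') := by
  have hM'S : suppliesOf M' ⊆ Ssup := fun j hj => by
    obtain ⟨e, he, h2⟩ := mem_supp.1 hj; exact h2 ▸ (hM'.2 e he).2
  have hTT' : Ssup \ suppliesOf M' ⊆ Ssup \ suppliesOf M := fun j hj => by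
    have h' := Finset.mem_sdiff.1 hj
    exact Finset.mem_sdiff.2 ⟨h'.1, fun h => h'.2 (hsub h)⟩
  have hX : (Ssup \ suppliesOf M) \ (Ssup \ suppliesOf M') = suppliesOf M' \ suppliesOf M := by
    ext j
    simp only [Finset.mem_sdiff, not_and, not_not]
    constructor
    · rintro ⟨⟨hjS, hjM⟩, h⟩; exact ⟨h hjS, hjM⟩
    · rintro ⟨hjM', hjM⟩; exact ⟨⟨hM'S hjM', hjM⟩, fun _ => hjM'⟩
  have hlip := expMaxWM_lip (w := w) (Ed := Ed) hTT'
    (fun j hj => (hw j (Finset.mem_sdiff.1 (Finset.mem_sdiff.1 hj).1).1).le) hπ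
  have hsum : (∑ j ∈ suppliesOf M, w j)
      + ∑ j ∈ (Ssup \ suppliesOf M) \ (Ssup \ suppliesOf M'), w j
      = ∑ j ∈ suppliesOf M', w j := by
    rw [hX, add_comm]
    exact Finset.sum_sdiff hsub
  calc (∑ j ∈ suppliesOf M, w j) + expMaxWM π D2 w Ed (Ssup \ suppliesOf M)
      ≤ (∑ j ∈ suppliesOf M, w j) + (expMaxWM π D2 w Ed (Ssup \ suppliesOf M')
          + ∑ j ∈ (Ssup \ suppliesOf M) \ (Ssup \ suppliesOf M'), w j) :=
        add_le_add_right hlip _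
    _ = ((∑ j ∈ suppliesOf M, w j)
          + ∑ j ∈ (Ssup \ suppliesOf M) \ (Ssup \ suppliesOf M'), w j)
          + expMaxWM π D2 w Ed (Ssup \ suppliesOf M') := by ring
    _ = _ := by rw [hsum]

end Anal

/-- **Remark 1 / Proposition 2 (characterization of the optimum online policy).**
With `Φ(M1) := Σ_{j∈V_S(M1)} w_j + f^w(S∖V_S(M1))`, the maximum of `Φ` over all matchings
of `G[D1,S]` is attained at some maximum-cardinality matching; consequently the value of the
optimum online policy equals the maximum of `Σ_{j∈S∖T} w_j + f^w(T)` over all `T ⊆ S` such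
that `S∖T` is covered by a maximum-cardinality matching of `G[D1,S]`. -/
theorem opt_online_attained_at_max_cardinality_matching
    {D S : Type*} [DecidableEq D] [DecidableEq S]
    (D1 D2 : Finset D) (Ssup : Finset S) (Ed : Finset (D × S)) (w : S → ℝ)
    (hdisj : Disjoint D1 D2)
    (hE : ∀ e ∈ Ed, e.1 ∈ D1 ∪ D2 ∧ e.2 ∈ Ssup)
    (hw : ∀ j ∈ Ssup, 0 < w j)
    (π : D → ℝ) (hπ : ∀ i ∈ D2, π i ∈ Set.Icc (0 : ℝ) 1) :
    (∃ M, IsMatchingBtw Ed D1 Ssup M ∧ M.card = nuMatch Ed D1 Ssup ∧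
      ∀ M', IsMatchingBtw Ed D1 Ssup M' →
        (∑ j ∈ suppliesOf M', w j) + expMaxWM π D2 w Ed (Ssup \ suppliesOf M') ≤
          (∑ j ∈ suppliesOf M, w j) + expMaxWM π D2 w Ed (Ssup \ suppliesOf M)) ∧
    sSup {r : ℝ | ∃ M, IsMatchingBtw Ed D1 Ssup M ∧
        r = (∑ j ∈ suppliesOf M, w j) + expMaxWM π D2 w Ed (Ssup \ suppliesOf M)} =
      sSup {r : ℝ | ∃ T : Finset S, T ⊆ Ssup ∧
        (∃ M, IsMatchingBtw Ed D1 Ssup M ∧ M.card = nuMatch Ed D1 Ssup ∧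
          Ssup \ T ⊆ suppliesOf M) ∧
        r = (∑ j ∈ Ssup \ T, w j) + expMaxWM π D2 w Ed T} := by
    classical
  let Φ : Finset (D × S) → ℝ := fun M =>
    (∑ j ∈ suppliesOf M, w j) + expMaxWM π D2 w Ed (Ssup \ suppliesOf M)
  let 𝒮 : Finset (Finset (D × S)) := Ed.powerset.filter (fun M => IsMatchingBtw Ed D1 Ssup M)
  have hmem : ∀ M, M ∈ 𝒮 ↔ IsMatchingBtw Ed D1 Ssup M := by
    intro M
    simp only [𝒮, Finset.mem_filter, Finset.mem_powerset]
    exact ⟨fun h => h.2, fun h => ⟨h.1.1, h⟩⟩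
  have hSne : (∅ : Finset (D × S)) ∈ 𝒮 := (hmem ∅).2 (empty_matching _ _)
  obtain ⟨M0, hM0, hM0max⟩ := Finset.exists_max_image 𝒮 Φ ⟨∅, hSne⟩
  let 𝒮' : Finset (Finset (D × S)) := 𝒮.filter (fun M => ∀ M' ∈ 𝒮, Φ M' ≤ Φ M)
  have hS'ne : 𝒮'.Nonempty := ⟨M0, Finset.mem_filter.2 ⟨hM0, hM0max⟩⟩
  obtain ⟨Mb, hMb', hMbcard⟩ := Finset.exists_max_image 𝒮' (fun M => M.card) hS'ne
  have hMbmatch : IsMatchingBtw Ed D1 Ssup Mb := (hmem Mb).1 (Finset.mem_filter.1 hMb').1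
  have hMbmax : ∀ M' ∈ 𝒮, Φ M' ≤ Φ Mb := (Finset.mem_filter.1 hMb').2
  have hcard : Mb.card = nuMatch Ed D1 Ssup := by
    refine le_antisymm (card_le_nu hMbmatch) ?_
    by_contra hlt
    push_neg at hlt
    obtain ⟨N, hNmatch, hNcard⟩ := nu_attained (Ed := Ed) D1 Ssup
    have hltN : Mb.card < N.card := by omega
    obtain ⟨M', hP1, hP2, hP3, hP4⟩ := exchange Mb N hMbmatch.1.2 hNmatch.1.2 hltN
    have hM'match : IsMatchingBtw Ed D1 Ssup M' := by
      refine ⟨⟨fun e he => ?_, hP1⟩, fun e he => ?_⟩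
      · rcases Finset.mem_union.1 (hP2 he) with h | h
        · exact hMbmatch.1.1 h
        · exact hNmatch.1.1 h
      · rcases Finset.mem_union.1 (hP2 he) with h | h
        · exact hMbmatch.2 e h
        · exact hNmatch.2 e h
    have hΦle : Φ Mb ≤ Φ M' := Phi_le_Phi hMbmatch hM'match hw hπ hP4
    have hM'S' : M' ∈ 𝒮' := Finset.mem_filter.2 ⟨(hmem M').2 hM'match,
      fun M'' hM'' => le_trans (hMbmax M'' hM'') hΦle⟩
    have := hMbcard M' hM'S'
    omega
  have hMbSsub : suppliesOf Mb ⊆ Ssup := fun j hj => by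
    obtain ⟨e, he, h2⟩ := mem_supp.1 hj; exact h2 ▸ (hMbmatch.2 e he).2
  refine ⟨⟨Mb, hMbmatch, hcard, fun M' hM' => hMbmax M' ((hmem M').2 hM')⟩, ?_⟩
  have hLmem : Φ Mb ∈ {r : ℝ | ∃ M, IsMatchingBtw Ed D1 Ssup M ∧
      r = (∑ j ∈ suppliesOf M, w j) + expMaxWM π D2 w Ed (Ssup \ suppliesOf M)} :=
    ⟨Mb, hMbmatch, rfl⟩
  have hLub : ∀ r ∈ {r : ℝ | ∃ M, IsMatchingBtw Ed D1 Ssup M ∧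
      r = (∑ j ∈ suppliesOf M, w j) + expMaxWM π D2 w Ed (Ssup \ suppliesOf M)},
      r ≤ Φ Mb := by
    rintro r ⟨M, hM, rfl⟩
    exact hMbmax M ((hmem M).2 hM)
  have hRmem : Φ Mb ∈ {r : ℝ | ∃ T : Finset S, T ⊆ Ssup ∧
      (∃ M, IsMatchingBtw Ed D1 Ssup M ∧ M.card = nuMatch Ed D1 Ssup ∧
        Ssup \ T ⊆ suppliesOf M) ∧
      r = (∑ j ∈ Ssup \ T, w j) + expMaxWM π D2 w Ed T} := by
    refine ⟨Ssup \ suppliesOf Mb, Finset.sdiff_subset, ⟨Mb, hMbmatch, hcard, ?_⟩, ?_⟩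
    · rw [Finset.sdiff_sdiff_self_left]; exact Finset.inter_subset_right
    · rw [Finset.sdiff_sdiff_self_left, Finset.inter_eq_right.2 hMbSsub]
  have hRub : ∀ r ∈ {r : ℝ | ∃ T : Finset S, T ⊆ Ssup ∧
      (∃ M, IsMatchingBtw Ed D1 Ssup M ∧ M.card = nuMatch Ed D1 Ssup ∧
        Ssup \ T ⊆ suppliesOf M) ∧
      r = (∑ j ∈ Ssup \ T, w j) + expMaxWM π D2 w Ed T}, r ≤ Φ Mb := by
    rintro r ⟨T, hT, ⟨MT, hMT, _, hcov⟩, rfl⟩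
    have hMTS : suppliesOf MT ⊆ Ssup := fun j hj => by
      obtain ⟨e, he, h2⟩ := mem_supp.1 hj; exact h2 ▸ (hMT.2 e he).2
    have hT0 : Ssup \ suppliesOf MT ⊆ T := by
      intro j hj
      have h' := Finset.mem_sdiff.1 hj
      by_contra hjT
      exact h'.2 (hcov (Finset.mem_sdiff.2 ⟨h'.1, hjT⟩))
    have hwnn : ∀ j ∈ T \ (Ssup \ suppliesOf MT), 0 ≤ w j :=
      fun j hj => (hw j (hT (Finset.mem_sdiff.1 hj).1)).le
    have hlip := expMaxWM_lip (w := w) (Ed := Ed) hT0 hwnn hπ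
    have hXsub : T \ (Ssup \ suppliesOf MT) ⊆ suppliesOf MT := by
      intro j hj
      have h' := Finset.mem_sdiff.1 hj
      by_contra hjM
      exact h'.2 (Finset.mem_sdiff.2 ⟨hT h'.1, hjM⟩)
    have hdisj2 : Disjoint (Ssup \ T) (T \ (Ssup \ suppliesOf MT)) := by
      rw [Finset.disjoint_left]
      intro j hj hj'
      exact (Finset.mem_sdiff.1 hj).2 (Finset.mem_sdiff.1 hj').1
    have hsums : (∑ j ∈ Ssup \ T, w j) + ∑ j ∈ T \ (Ssup \ suppliesOf MT), w j
        ≤ ∑ j ∈ suppliesOf MT, w j := by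
      rw [← Finset.sum_union hdisj2]
      apply Finset.sum_le_sum_of_subset_of_nonneg
      · intro j hj
        rcases Finset.mem_union.1 hj with h | h
        · exact hcov h
        · exact hXsub h
      · intro j hj _
        exact (hw j (hMTS hj)).le
    calc (∑ j ∈ Ssup \ T, w j) + expMaxWM π D2 w Ed T
        ≤ (∑ j ∈ Ssup \ T, w j) + (expMaxWM π D2 w Ed (Ssup \ suppliesOf MT)
            + ∑ j ∈ T \ (Ssup \ suppliesOf MT), w j) := add_le_add_right hlip _
      _ = ((∑ j ∈ Ssup \ T, w j) + ∑ j ∈ T \ (Ssup \ suppliesOf MT), w j)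
            + expMaxWM π D2 w Ed (Ssup \ suppliesOf MT) := by ring
      _ ≤ (∑ j ∈ suppliesOf MT, w j) + expMaxWM π D2 w Ed (Ssup \ suppliesOf MT) :=
            add_le_add_left hsums _
      _ ≤ Φ Mb := hMbmax MT ((hmem MT).2 hMT)
  have hL := le_antisymm (csSup_le (Set.nonempty_of_mem hLmem) hLub)
    (le_csSup ⟨Φ Mb, fun r hr => hLub r hr⟩ hLmem)
  have hR := le_antisymm (csSup_le (Set.nonempty_of_mem hRmem) hRub)
    (le_csSup ⟨Φ Mb, fun r hr => hRub r hr⟩ hRmem)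
  rw [hL, hR]
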